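/- Let f : ℝ → ℝ be either bounded and continuous or uniformly continuous, and let n ∈ ℕ. Then ω(A_n^*(f), θ) ≤ ω(f, θ) for every θ > 0. Moreover, if f is uniformly continuous then A_n^*(f) is uniformly continuous. -/

import Mathlib

open MeasureTheory Real Filter Set
open scoped Topology

noncomputable def nu (B q β x : ℝ) : ℝ := 1 / (1 + q * B ^ (-(β * x)))

noncomputable def G (B q β x : ℝ) : ℝ := (nu B q β (x + 1) - nu B q β (x - 1)) / 2

noncomputable def Psi (B q β x : ℝ) : ℝ := (G B q β x + G B (1 / q) β x) / 2

noncomputable def modCont (f : ℝ → ℝ) (θ : ℝ) : ℝ :=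
  sSup {d : ℝ | ∃ x y : ℝ, |x - y| ≤ θ ∧ d = |f x - f y|}

noncomputable def supNorm (f : ℝ → ℝ) : ℝ := ⨆ x : ℝ, |f x|

noncomputable def opA (B q β : ℝ) (n : ℕ) (f : ℝ → ℝ) (x : ℝ) : ℝ :=
  ∫ v : ℝ, f (v / n) * Psi B q β (n * x - v)

noncomputable def opAStar (B q β : ℝ) (n : ℕ) (f : ℝ → ℝ) (x : ℝ) : ℝ :=
  (n : ℝ) * ∫ v : ℝ, (∫ h in (v / n)..((v + 1) / n), f h) * Psi B q β (n * x - v)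

noncomputable def opABar (B q β : ℝ) (r : ℕ) (w : ℕ → ℝ) (n : ℕ) (f : ℝ → ℝ) (x : ℝ) : ℝ :=
  ∫ v : ℝ, (∑ s ∈ Finset.Icc 1 r, w s * f (v / n + (s : ℝ) / ((n : ℝ) * (r : ℝ)))) *
    Psi B q β (n * x - v)

/-- Kantorovich operator in the convolution form `n ∫ (∫_0^{1/n} f(t + x − h/n) dt) Ψ(h) dh`. -/
noncomputable def opAStarPt (B q β : ℝ) (n : ℕ) (f : ℝ → ℝ) (x : ℝ) : ℝ :=
  (n : ℝ) * ∫ h : ℝ, (∫ t in (0 : ℝ)..(1 / (n : ℝ)), f (t + x - h / n)) * Psi B q β h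


lemma integral_exp_mul (c a b : ℝ) (hc : c ≠ 0) :
    ∫ x in a..b, Real.exp (c * x) = (Real.exp (c * b) - Real.exp (c * a)) / c := by
  have hd : ∀ x : ℝ, HasDerivAt (fun y => Real.exp (c * y) / c) (Real.exp (c * x)) x := by
    intro x
    have := (((hasDerivAt_id x).const_mul c).exp).div_const c
    simpa [mul_comm, mul_div_assoc, mul_div_cancel_right₀, hc] using this
  rw [intervalIntegral.integral_eq_sub_of_hasDerivAt (fun x _ => hd x)
    ((Real.continuous_exp.comp (continuous_const.mul continuous_id)).intervalIntegrable a b)]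
  ring

lemma integrable_exp_neg_abs {c : ℝ} (hc : 0 < c) :
    Integrable (fun x : ℝ => Real.exp (-(c * |x|))) := by
  have hcont : Continuous fun x : ℝ => Real.exp (-(c * |x|)) :=
    Real.continuous_exp.comp (continuous_const.mul continuous_abs).neg
  apply integrable_of_intervalIntegral_norm_bounded (a := fun R : ℝ => -R)
    (b := fun R : ℝ => R) (l := atTop) (2 / c)
  · intro R; exact hcont.integrableOn_Ioc
  · exact tendsto_neg_atTop_atBot
  · exact tendsto_id
  · filter_upwards [eventually_ge_atTop (0 : ℝ)] with R hR
    have hint : ∀ a b : ℝ, IntervalIntegrable (fun x : ℝ => Real.exp (-(c * |x|))) volume a b :=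
      fun a b => hcont.intervalIntegrable a b
    have hnorm : (fun x : ℝ => ‖Real.exp (-(c * |x|))‖) = fun x : ℝ => Real.exp (-(c * |x|)) := by
      funext x; exact Real.norm_of_nonneg (Real.exp_pos _).le
    rw [hnorm]
    rw [← intervalIntegral.integral_add_adjacent_intervals (hint (-R) 0) (hint 0 R)]
    have h1 : ∫ x in (-R)..0, Real.exp (-(c * |x|)) = ∫ x in (-R)..0, Real.exp (c * x) := by
      apply intervalIntegral.integral_congr
      intro x hx
      rw [Set.uIcc_of_le (by linarith : -R ≤ 0)] at hx
      simp only
      rw [abs_of_nonpos hx.2]; ring_nf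
    have h2 : ∫ x in (0:ℝ)..R, Real.exp (-(c * |x|)) = ∫ x in (0:ℝ)..R, Real.exp (-c * x) := by
      apply intervalIntegral.integral_congr
      intro x hx
      rw [Set.uIcc_of_le hR] at hx
      simp only
      rw [abs_of_nonneg hx.1]; ring_nf
    rw [h1, h2, integral_exp_mul c _ _ hc.ne', integral_exp_mul (-c) _ _ (neg_ne_zero.mpr hc.ne')]
    have e1 : Real.exp (c * -R) ≥ 0 := (Real.exp_pos _).le
    have e2 : Real.exp (-c * R) ≥ 0 := (Real.exp_pos _).le
    have e3 : Real.exp (c * 0) = 1 := by norm_num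
    have e4 : Real.exp (-c * 0) = 1 := by norm_num
    have key1 : (Real.exp (c * 0) - Real.exp (c * -R)) / c ≤ 1 / c := by
      rw [div_le_div_iff₀ hc hc]
      nlinarith [e1, Real.exp_zero]
    have key2 : (Real.exp (-c * R) - Real.exp (-c * 0)) / (-c) ≤ 1 / c := by
      have hrw : (Real.exp (-c * R) - Real.exp (-c * 0)) / (-c)
          = (Real.exp (-c * 0) - Real.exp (-c * R)) / c := by
        rw [div_eq_div_iff (neg_ne_zero.mpr hc.ne') hc.ne']
        ring
      rw [hrw, div_le_div_iff₀ hc hc]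
      nlinarith [e2, Real.exp_zero]
    have : (2:ℝ)/c = 1/c + 1/c := by ring
    rw [this]
    exact add_le_add key1 key2





section NuLemmas
variable {B q β : ℝ}

lemma nu_eq (hB : 1 < B) (x : ℝ) :
    nu B q β x = 1 / (1 + q * Real.exp (-(β * Real.log B * x))) := by
  unfold nu
  rw [Real.rpow_def_of_pos (lt_trans one_pos hB)]
  rw [show Real.log B * (-(β * x)) = -(β * Real.log B * x) by ring]

lemma logB_pos (hB : 1 < B) (hβ : 0 < β) : 0 < β * Real.log B :=
  mul_pos hβ (Real.log_pos hB)

lemma nu_denom_pos (hq : 0 < q) (t : ℝ) : 0 < 1 + q * Real.exp t := by positivity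

lemma nu_mono (hB : 1 < B) (hq : 0 < q) (hβ : 0 < β) {x y : ℝ} (hxy : x ≤ y) :
    nu B q β x ≤ nu B q β y := by
  rw [nu_eq hB, nu_eq hB]
  apply one_div_le_one_div_of_le (nu_denom_pos hq _)
  have : Real.exp (-(β * Real.log B * y)) ≤ Real.exp (-(β * Real.log B * x)) := by
    apply Real.exp_le_exp.mpr
    have hL := logB_pos hB hβ
    nlinarith
  nlinarith

lemma nu_nonneg (hB : 1 < B) (hq : 0 < q) (x : ℝ) : 0 ≤ nu B q β x := by
  rw [nu_eq hB]
  positivity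

lemma nu_le_one (hB : 1 < B) (hq : 0 < q) (x : ℝ) : nu B q β x ≤ 1 := by
  rw [nu_eq hB]
  rw [div_le_one (nu_denom_pos hq _)]
  nlinarith [Real.exp_pos (-(β * Real.log B * x))]

lemma one_sub_nu_le (hB : 1 < B) (hq : 0 < q) (x : ℝ) :
    1 - nu B q β x ≤ q * Real.exp (-(β * Real.log B * x)) := by
  rw [nu_eq hB]
  set E := Real.exp (-(β * Real.log B * x)) with hE
  have hEpos : 0 < E := Real.exp_pos _
  have hD : 0 < 1 + q * E := nu_denom_pos hq _
  have h1 : 1 / (1 + q * E) * (1 + q * E) = 1 := div_mul_cancel₀ 1 hD.ne'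
  nlinarith [mul_pos hq hEpos, one_div_pos.mpr hD]

lemma nu_le_exp (hB : 1 < B) (hq : 0 < q) (x : ℝ) :
    nu B q β x ≤ (1 / q) * Real.exp (β * Real.log B * x) := by
  rw [nu_eq hB]
  set E := Real.exp (-(β * Real.log B * x)) with hE
  have hEpos : 0 < E := Real.exp_pos _
  have h1 : 1 / (1 + q * E) ≤ 1 / (q * E) :=
    one_div_le_one_div_of_le (by positivity) (by nlinarith)
  refine h1.trans ?_
  have : Real.exp (β * Real.log B * x) = E⁻¹ := by
    rw [hE, ← Real.exp_neg]; ring_nf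
  rw [this]
  rw [one_div, mul_inv]
  rw [one_div]

lemma G_nonneg (hB : 1 < B) (hq : 0 < q) (hβ : 0 < β) (x : ℝ) : 0 ≤ G B q β x := by
  unfold G
  have := nu_mono hB hq hβ (show x - 1 ≤ x + 1 by linarith)
  linarith

lemma continuous_nu (hB : 1 < B) (hq : 0 < q) : Continuous (nu B q β) := by
  have h : nu B q β = fun x => 1 / (1 + q * Real.exp (-(β * Real.log B * x))) :=
    funext (nu_eq hB)
  rw [h]
  refine Continuous.div continuous_const ?_ fun x => (nu_denom_pos hq _).ne'
  fun_prop

lemma continuous_G (hB : 1 < B) (hq : 0 < q) : Continuous (G B q β) := by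
  unfold G
  exact (((continuous_nu hB hq).comp (continuous_id.add continuous_const)).sub
    ((continuous_nu hB hq).comp (continuous_id.sub continuous_const))).div_const 2

lemma G_le (hB : 1 < B) (hq : 0 < q) (hβ : 0 < β) (x : ℝ) :
    G B q β x ≤ (q + 1 / q) * Real.exp (β * Real.log B) *
      Real.exp (-(β * Real.log B * |x|)) := by
  set L := β * Real.log B with hL
  have hLpos : 0 < L := logB_pos hB hβ
  have hq' : 0 < 1 / q := by positivity
  rcases le_or_gt 0 x with hx | hx
  · rw [abs_of_nonneg hx]
    have h1 : G B q β x ≤ (1 - nu B q β (x - 1)) / 2 := by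
      unfold G
      have := nu_le_one (β := β) hB hq (x + 1)
      linarith
    have h2 : 1 - nu B q β (x - 1) ≤ q * Real.exp (-(L * (x - 1))) := one_sub_nu_le hB hq _
    have h3 : Real.exp (-(L * (x - 1))) = Real.exp L * Real.exp (-(L * x)) := by
      rw [← Real.exp_add]; ring_nf
    have hexp : 0 < Real.exp (-(L * x)) := Real.exp_pos _
    have hexpL : 0 < Real.exp L := Real.exp_pos _
    have h4 : G B q β x ≤ q * (Real.exp L * Real.exp (-(L * x))) / 2 := by
      rw [← h3]; nlinarith
    nlinarith [mul_pos hexpL hexp, mul_pos (show (0:ℝ) < q / 2 + 1 / q by positivity)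
      (mul_pos hexpL hexp)]
  · rw [abs_of_neg hx]
    have h1 : G B q β x ≤ nu B q β (x + 1) / 2 := by
      unfold G
      have := nu_nonneg (β := β) hB hq (x - 1)
      linarith
    have h2 : nu B q β (x + 1) ≤ (1 / q) * Real.exp (L * (x + 1)) := nu_le_exp hB hq _
    have h3 : Real.exp (L * (x + 1)) = Real.exp L * Real.exp (-(L * -x)) := by
      rw [← Real.exp_add]; ring_nf
    have hexp : 0 < Real.exp (-(L * -x)) := Real.exp_pos _
    have hexpL : 0 < Real.exp L := Real.exp_pos _
    have h4 : G B q β x ≤ (1 / q) * (Real.exp L * Real.exp (-(L * -x))) / 2 := by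
      rw [← h3]; nlinarith
    nlinarith [mul_pos hexpL hexp, mul_pos (show (0:ℝ) < q + 1 / q / 2 by positivity)
      (mul_pos hexpL hexp)]

end NuLemmas

section PsiLemmas
variable {B q β : ℝ}

lemma Psi_nonneg (hB : 1 < B) (hq : 0 < q) (hβ : 0 < β) (x : ℝ) : 0 ≤ Psi B q β x := by
  unfold Psi
  have h1 := G_nonneg hB hq hβ x
  have h2 := G_nonneg hB (show (0:ℝ) < 1 / q by positivity) hβ x
  linarith

lemma continuous_Psi (hB : 1 < B) (hq : 0 < q) : Continuous (Psi B q β) := by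
  unfold Psi
  exact ((continuous_G hB hq).add (continuous_G hB (by positivity))).div_const 2

lemma Psi_le (hB : 1 < B) (hq : 0 < q) (hβ : 0 < β) (x : ℝ) :
    Psi B q β x ≤ (q + 1 / q) * Real.exp (β * Real.log B) *
      Real.exp (-(β * Real.log B * |x|)) := by
  unfold Psi
  have h1 := G_le hB hq hβ x
  have h2 := G_le hB (show (0:ℝ) < 1 / q by positivity) hβ x
  rw [one_div_one_div] at h2
  have : (1 / q + q) = (q + 1 / q) := by ring
  rw [this] at h2
  linarith

lemma integrable_G (hB : 1 < B) (hq : 0 < q) (hβ : 0 < β) : Integrable (G B q β) := by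
  have hL := logB_pos hB hβ
  refine Integrable.mono' (((integrable_exp_neg_abs hL).const_mul
    ((q + 1 / q) * Real.exp (β * Real.log B)))) (continuous_G hB hq).aestronglyMeasurable ?_
  refine ae_of_all _ fun x => ?_
  rw [Real.norm_of_nonneg (G_nonneg hB hq hβ x)]
  simpa [mul_assoc] using G_le hB hq hβ x

lemma integrable_Psi (hB : 1 < B) (hq : 0 < q) (hβ : 0 < β) : Integrable (Psi B q β) := by
  unfold Psi
  exact ((integrable_G hB hq hβ).add (integrable_G hB (by positivity) hβ)).div_const 2

lemma nu_eq2 (hB : 1 < B) (hq : 0 < q) (x : ℝ) :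
    nu B q β x = Real.exp (β * Real.log B * x) / (q + Real.exp (β * Real.log B * x)) := by
  rw [nu_eq hB, Real.exp_neg]
  have h1 : 0 < Real.exp (β * Real.log B * x) := Real.exp_pos _
  field_simp
  ring

lemma hasDerivAt_F (hB : 1 < B) (hq : 0 < q) (hβ : 0 < β) (x : ℝ) :
    HasDerivAt (fun y => Real.log (q + Real.exp (β * Real.log B * y)) / (β * Real.log B))
      (nu B q β x) x := by
  set L := β * Real.log B with hLdef
  have hL : 0 < L := logB_pos hB hβ
  have hinner : HasDerivAt (fun y : ℝ => q + Real.exp (L * y)) (Real.exp (L * x) * L) x := by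
    have h1 : HasDerivAt (fun y : ℝ => L * y) L x := by
      simpa using (hasDerivAt_id x).const_mul L
    exact (h1.exp).const_add q
  have hpos : (0:ℝ) < q + Real.exp (L * x) := by positivity
  have hlog := (hinner.log hpos.ne').div_const L
  have : Real.exp (L * x) * L / (q + Real.exp (L * x)) / L
      = Real.exp (L * x) / (q + Real.exp (L * x)) := by
    field_simp
  rw [this] at hlog
  rw [nu_eq2 hB hq]
  exact hlog

lemma integral_G_eq_one (hB : 1 < B) (hq : 0 < q) (hβ : 0 < β) :
    ∫ x : ℝ, G B q β x = 1 := by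
  set L := β * Real.log B with hLdef
  have hL : 0 < L := logB_pos hB hβ
  set F := fun x : ℝ => Real.log (q + Real.exp (L * x)) / L with hF
  set H := fun x : ℝ => (F (x + 1) - F (x - 1)) / 2 with hH
  have hHderiv : ∀ x : ℝ, HasDerivAt H (G B q β x) x := by
    intro x
    have h1 : HasDerivAt (fun y : ℝ => F (y + 1)) (nu B q β (x + 1)) x := by
      have := (hasDerivAt_F hB hq hβ (x + 1)).comp x ((hasDerivAt_id x).add_const 1)
      simpa [Function.comp_def] using this
    have h2 : HasDerivAt (fun y : ℝ => F (y - 1)) (nu B q β (x - 1)) x := by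
      have := (hasDerivAt_F hB hq hβ (x - 1)).comp x ((hasDerivAt_id x).sub_const 1)
      simpa [Function.comp_def] using this
    exact (h1.sub h2).div_const 2
  have key : ∀ R : ℝ, ∫ x in (-R)..R, G B q β x = H R - H (-R) := fun R =>
    intervalIntegral.integral_eq_sub_of_hasDerivAt (fun x _ => hHderiv x)
      ((continuous_G hB hq).intervalIntegrable _ _)
  have t1 : Tendsto (fun R : ℝ => ∫ x in (-R)..R, G B q β x) atTop (𝓝 (∫ x, G B q β x)) :=
    intervalIntegral_tendsto_integral (integrable_G hB hq hβ) tendsto_neg_atTop_atBot tendsto_id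
  -- compute the limit of H R - H (-R)
  have F_eq : ∀ x : ℝ, F x = x + Real.log (1 + q * Real.exp (-(L * x))) / L := by
    intro x
    have hsplit : q + Real.exp (L * x) = Real.exp (L * x) * (1 + q * Real.exp (-(L * x))) := by
      rw [Real.exp_neg]
      field_simp
      ring
    rw [hF]
    simp only
    rw [hsplit, Real.log_mul (Real.exp_ne_zero _) (by positivity), Real.log_exp]
    field_simp
  set g := fun x : ℝ => Real.log (1 + q * Real.exp (-(L * x))) / L with hg
  have hg0 : Tendsto g atTop (𝓝 0) := by
    have h1 : Tendsto (fun x : ℝ => -(L * x)) atTop atBot := by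
      have := Tendsto.const_mul_atTop hL (tendsto_id (α := ℝ) (x := atTop))
      exact tendsto_neg_atTop_atBot.comp this
    have h2 : Tendsto (fun x : ℝ => Real.exp (-(L * x))) atTop (𝓝 0) :=
      Real.tendsto_exp_atBot.comp h1
    have h3 : Tendsto (fun x : ℝ => 1 + q * Real.exp (-(L * x))) atTop (𝓝 (1 + q * 0)) :=
      tendsto_const_nhds.add (h2.const_mul q)
    rw [mul_zero, add_zero] at h3
    have h4 : Tendsto (fun x : ℝ => Real.log (1 + q * Real.exp (-(L * x)))) atTop (𝓝 0) := by
      have := (Real.continuousAt_log (by norm_num : (1:ℝ) ≠ 0)).tendsto.comp h3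
      simpa [Real.log_one, Function.comp_def] using this
    simpa using h4.div_const L
  have part1 : Tendsto (fun R : ℝ => H R) atTop (𝓝 1) := by
    have heq : (fun R : ℝ => H R) = fun R => 1 + (g (R + 1) - g (R - 1)) / 2 := by
      funext R
      rw [hH]
      simp only
      rw [F_eq, F_eq]
      ring
    rw [heq]
    have c1 : Tendsto (fun R : ℝ => R + 1) atTop atTop := tendsto_atTop_add_const_right _ 1 tendsto_id
    have c2 : Tendsto (fun R : ℝ => R - 1) atTop atTop := tendsto_atTop_add_const_right _ (-1) tendsto_id
    have := (((hg0.comp c1).sub (hg0.comp c2)).div_const 2).const_add 1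
    simpa using this
  have part2 : Tendsto (fun R : ℝ => H (-R)) atTop (𝓝 0) := by
    have hFlim : ∀ c : ℝ, Tendsto (fun R : ℝ => F (-R + c)) atTop (𝓝 (Real.log q / L)) := by
      intro c
      have h1 : Tendsto (fun R : ℝ => L * (-R + c)) atTop atBot := by
        have heq : (fun R : ℝ => L * (-R + c)) = fun R => -(L * R) + L * c := by
          funext R; ring
        rw [heq]
        apply tendsto_atBot_add_const_right
        exact tendsto_neg_atTop_atBot.comp (Tendsto.const_mul_atTop hL tendsto_id)
      have h2 : Tendsto (fun R : ℝ => q + Real.exp (L * (-R + c))) atTop (𝓝 (q + 0)) :=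
        tendsto_const_nhds.add (Real.tendsto_exp_atBot.comp h1)
      rw [add_zero] at h2
      have h3 := ((Real.continuousAt_log hq.ne').tendsto.comp h2).div_const L
      exact h3
    have := ((hFlim 1).sub (hFlim (-1))).div_const 2
    have heq : (fun R : ℝ => H (-R)) = fun R => (F (-R + 1) - F (-R + -1)) / 2 := by
      funext R
      rw [hH]
      simp only
      ring_nf
    rw [heq]
    simpa using this
  have t2 : Tendsto (fun R : ℝ => H R - H (-R)) atTop (𝓝 1) := by
    simpa using part1.sub part2
  have t1' : Tendsto (fun R : ℝ => H R - H (-R)) atTop (𝓝 (∫ x, G B q β x)) := by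
    have heq : (fun R : ℝ => H R - H (-R)) = fun R => ∫ x in (-R)..R, G B q β x := by
      funext R; rw [key]
    rw [heq]
    exact t1
  exact tendsto_nhds_unique t1' t2

lemma integral_Psi_eq_one (hB : 1 < B) (hq : 0 < q) (hβ : 0 < β) :
    ∫ x : ℝ, Psi B q β x = 1 := by
  unfold Psi
  rw [integral_div]
  rw [integral_add (integrable_G hB hq hβ) (integrable_G hB (by positivity) hβ)]
  rw [integral_G_eq_one hB hq hβ, integral_G_eq_one hB (by positivity) hβ]
  norm_num

end PsiLemmas


section Chain

lemma chain_bound {f : ℝ → ℝ} {δ ε : ℝ} (hδ : 0 < δ)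
    (h : ∀ u v : ℝ, |u - v| ≤ δ → |f u - f v| ≤ ε) :
    ∀ k : ℕ, ∀ u v : ℝ, |u - v| ≤ k * δ → |f u - f v| ≤ k * ε := by
  intro k
  induction k with
  | zero =>
    intro u v h0
    simp only [Nat.cast_zero, zero_mul] at h0 ⊢
    have : u = v := by
      have := abs_nonpos_iff.mp h0
      linarith [sub_eq_zero.mp this]
    rw [this, sub_self, abs_zero]
  | succ k ih =>
    intro u v huv
    push_cast at huv ⊢
    have hk1 : (0:ℝ) < (k:ℝ) + 1 := by positivity
    set w := v + ((k:ℝ)/((k:ℝ)+1)) * (u - v) with hw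
    have h1 : |u - w| ≤ δ := by
      have he : u - w = (u - v) * (1/((k:ℝ)+1)) := by
        rw [hw]; field_simp; ring
      rw [he, abs_mul, abs_of_nonneg (by positivity : (0:ℝ) ≤ 1/((k:ℝ)+1))]
      calc |u - v| * (1/((k:ℝ)+1)) ≤ (((k:ℝ)+1) * δ) * (1/((k:ℝ)+1)) := by
            apply mul_le_mul_of_nonneg_right huv (by positivity)
        _ = δ := by field_simp
    have h2 : |w - v| ≤ (k:ℝ) * δ := by
      have he : w - v = (u - v) * ((k:ℝ)/((k:ℝ)+1)) := by rw [hw]; ring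
      rw [he, abs_mul, abs_of_nonneg (by positivity : (0:ℝ) ≤ (k:ℝ)/((k:ℝ)+1))]
      calc |u - v| * ((k:ℝ)/((k:ℝ)+1)) ≤ (((k:ℝ)+1) * δ) * ((k:ℝ)/((k:ℝ)+1)) := by
            apply mul_le_mul_of_nonneg_right huv (by positivity)
        _ = (k:ℝ) * δ := by field_simp
    calc |f u - f v| ≤ |f u - f w| + |f w - f v| := abs_sub_le _ _ _
      _ ≤ ε + (k:ℝ) * ε := add_le_add (h u w h1) (ih w v h2)
      _ = ((k:ℝ) + 1) * ε := by ring

lemma uc_base {f : ℝ → ℝ} (huc : UniformContinuous f) {ε : ℝ} (hε : 0 < ε) :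
    ∃ δ : ℝ, 0 < δ ∧ ∀ u v : ℝ, |u - v| ≤ δ → |f u - f v| ≤ ε := by
  obtain ⟨δ, hδ, hδ'⟩ := Metric.uniformContinuous_iff.mp huc ε hε
  refine ⟨δ/2, by positivity, fun u v h => ?_⟩
  have := hδ' (show dist u v < δ by rw [Real.dist_eq]; linarith)
  rw [Real.dist_eq] at this
  linarith

lemma uc_growth {f : ℝ → ℝ} (huc : UniformContinuous f) :
    ∃ c0 c1 : ℝ, 0 ≤ c1 ∧ ∀ z : ℝ, |f z| ≤ c0 + c1 * |z| := by
  obtain ⟨δ, hδ, hbase⟩ := uc_base huc one_pos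
  refine ⟨|f 0| + 1, 1/δ, by positivity, fun z => ?_⟩
  set k := ⌈|z| / δ⌉₊ with hk
  have h1 : |z - 0| ≤ (k:ℝ) * δ := by
    rw [sub_zero]
    have hle := Nat.le_ceil (|z| / δ)
    calc |z| = |z| / δ * δ := by field_simp
      _ ≤ (k:ℝ) * δ := mul_le_mul_of_nonneg_right hle hδ.le
  have h2 := chain_bound hδ hbase k z 0 h1
  have h3 : (k:ℝ) ≤ |z| / δ + 1 := by
    have := Nat.ceil_lt_add_one (by positivity : (0:ℝ) ≤ |z| / δ)
    linarith
  have h4 : |f z| - |f 0| ≤ |f z - f 0| := abs_sub_abs_le_abs_sub _ _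
  have h5 : |z| / δ = (1/δ) * |z| := by ring
  rw [mul_one] at h2
  nlinarith [abs_nonneg z]

end Chain

section ModContLemmas

lemma bddAbove_modContSet {f : ℝ → ℝ}
    (hf : (Continuous f ∧ ∃ M : ℝ, ∀ x : ℝ, |f x| ≤ M) ∨ UniformContinuous f) (θ : ℝ) :
    BddAbove {d : ℝ | ∃ x y : ℝ, |x - y| ≤ θ ∧ d = |f x - f y|} := by
  rcases hf with ⟨_, M, hM⟩ | huc
  · refine ⟨2 * M, ?_⟩
    rintro d ⟨x, y, _, rfl⟩
    calc |f x - f y| ≤ |f x| + |f y| := abs_sub _ _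
      _ ≤ 2 * M := by linarith [hM x, hM y]
  · obtain ⟨δ, hδ, hbase⟩ := uc_base huc one_pos
    refine ⟨(⌈θ / δ⌉₊ : ℝ), ?_⟩
    rintro d ⟨x, y, hxy, rfl⟩
    have h1 : |x - y| ≤ (⌈θ / δ⌉₊ : ℝ) * δ := by
      refine hxy.trans ?_
      have hle := Nat.le_ceil (θ / δ)
      calc θ = θ / δ * δ := by field_simp
        _ ≤ (⌈θ / δ⌉₊ : ℝ) * δ := mul_le_mul_of_nonneg_right hle hδ.le
    have := chain_bound hδ hbase _ x y h1
    rwa [mul_one] at this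


lemma le_modCont {f : ℝ → ℝ} {x y θ : ℝ}
    (hbdd : BddAbove {d : ℝ | ∃ x y : ℝ, |x - y| ≤ θ ∧ d = |f x - f y|})
    (hxy : |x - y| ≤ θ) : |f x - f y| ≤ modCont f θ :=
  le_csSup hbdd ⟨x, y, hxy, rfl⟩

lemma modCont_nonneg {f : ℝ → ℝ} {θ : ℝ}
    (hbdd : BddAbove {d : ℝ | ∃ x y : ℝ, |x - y| ≤ θ ∧ d = |f x - f y|})
    (hθ : 0 ≤ θ) : 0 ≤ modCont f θ := by
  have h0 : (0:ℝ) ∈ {d : ℝ | ∃ x y : ℝ, |x - y| ≤ θ ∧ d = |f x - f y|} :=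
    ⟨0, 0, by simpa using hθ, by simp⟩
  exact le_csSup hbdd h0

lemma poly_exp_bound {L A c t : ℝ} (hL : 0 < L) (hA : 0 ≤ A) (hc : 0 ≤ c) (ht : 0 ≤ t) :
    (A + c * t) * Real.exp (-(L * t)) ≤ (A + 2 * c / L) * Real.exp (-(L / 2 * t)) := by
  have e1 : (0:ℝ) < Real.exp (-(L / 2 * t)) := Real.exp_pos _
  have hmono : Real.exp (-(L * t)) ≤ Real.exp (-(L / 2 * t)) :=
    Real.exp_le_exp.mpr (by nlinarith)
  have hsplit : Real.exp (-(L * t)) = Real.exp (-(L / 2 * t)) * Real.exp (-(L / 2 * t)) := by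
    rw [← Real.exp_add]; ring_nf
  have h2 : L / 2 * t ≤ Real.exp (L / 2 * t) := by
    have := Real.add_one_le_exp (L / 2 * t); linarith
  have hinv : Real.exp (-(L / 2 * t)) * Real.exp (L / 2 * t) = 1 := by
    rw [← Real.exp_add]; simp
  have h3 : t * Real.exp (-(L / 2 * t)) ≤ 2 / L := by
    have h4 := mul_le_mul_of_nonneg_right h2 e1.le
    have h5 : Real.exp (-(L / 2 * t)) * (L / 2 * t) ≤ 1 := by
      calc Real.exp (-(L / 2 * t)) * (L / 2 * t) = L / 2 * t * Real.exp (-(L / 2 * t)) := by ring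
        _ ≤ Real.exp (L / 2 * t) * Real.exp (-(L / 2 * t)) := h4
        _ = 1 := by rw [mul_comm]; exact hinv
    have h6 : 2 / L * L = 2 := by field_simp
    nlinarith
  calc (A + c * t) * Real.exp (-(L * t))
      = A * Real.exp (-(L * t)) + c * (t * Real.exp (-(L * t))) := by ring
    _ ≤ A * Real.exp (-(L / 2 * t)) + c * ((2 / L) * Real.exp (-(L / 2 * t))) := by
        have b1 := mul_le_mul_of_nonneg_left hmono hA
        have b2 : t * Real.exp (-(L * t)) ≤ (2 / L) * Real.exp (-(L / 2 * t)) := by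
          rw [hsplit, ← mul_assoc]
          exact mul_le_mul_of_nonneg_right h3 e1.le
        have b3 := mul_le_mul_of_nonneg_left b2 hc
        linarith
    _ = (A + 2 * c / L) * Real.exp (-(L / 2 * t)) := by ring

section Key
variable {B q β : ℝ}

lemma key_estimate (hB : 1 < B) (hq : 0 < q) (hβ : 0 < β) {f : ℝ → ℝ}
    (hcont : Continuous f) {c0 c1 : ℝ} (hc1 : 0 ≤ c1)
    (hgrow : ∀ z : ℝ, |f z| ≤ c0 + c1 * |z|) (n : ℕ) {x y ε : ℝ} (hε : 0 ≤ ε)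
    (hclose : ∀ u v : ℝ, |u - v| ≤ |x - y| → |f u - f v| ≤ ε) :
    |opAStarPt B q β n f x - opAStarPt B q β n f y| ≤ ε := by
  rcases Nat.eq_zero_or_pos n with hn | hn
  · subst hn
    unfold opAStarPt
    simpa using hε
  have hn' : (0:ℝ) < (n:ℝ) := by exact_mod_cast hn
  have hn1 : (1:ℝ) ≤ (n:ℝ) := by exact_mod_cast hn
  set L := β * Real.log B with hLdef
  have hL : 0 < L := logB_pos hB hβ
  set I : ℝ → ℝ → ℝ := fun z h => ∫ t in (0:ℝ)..(1/(n:ℝ)), f (t + z - h / (n:ℝ)) with hIdef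
  -- continuity of I z in h
  have hIcont : ∀ z : ℝ, Continuous fun h => I z h := by
    intro z
    have hF0 : Continuous fun t : ℝ => ∫ s in (0:ℝ)..t, f s :=
      intervalIntegral.continuous_primitive (fun a b => hcont.intervalIntegrable a b) 0
    have hIf : ∀ h : ℝ, I z h
        = (∫ s in (0:ℝ)..(1/(n:ℝ) + (z - h/(n:ℝ))), f s) - ∫ s in (0:ℝ)..(z - h/(n:ℝ)), f s := by
      intro h
      have e1 : ∀ t : ℝ, t + z - h/(n:ℝ) = t + (z - h/(n:ℝ)) := fun t => by ring
      have e2 : I z h = ∫ t in (0:ℝ)..(1/(n:ℝ)), f (t + (z - h/(n:ℝ))) := by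
        rw [hIdef]; simp only; congr 1; funext t; rw [e1]
      rw [e2, intervalIntegral.integral_comp_add_right f (z - h/(n:ℝ))]
      rw [← intervalIntegral.integral_interval_sub_left
        (hcont.intervalIntegrable _ _) (hcont.intervalIntegrable _ _)]
      rw [zero_add]
    have : (fun h => I z h)
        = fun h => (∫ s in (0:ℝ)..(1/(n:ℝ) + (z - h/(n:ℝ))), f s)
            - ∫ s in (0:ℝ)..(z - h/(n:ℝ)), f s := funext hIf
    rw [this]
    exact (hF0.comp (by continuity)).sub (hF0.comp (by continuity))
  -- bound on I
  have hIbound : ∀ z h : ℝ, |I z h| ≤ (c0 + c1 * (1 + |z|) + c1 * |h|) * (1/(n:ℝ)) := by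
    intro z h
    have h1 : ∀ t ∈ Set.uIoc (0:ℝ) (1/(n:ℝ)), ‖f (t + z - h/(n:ℝ))‖ ≤
        c0 + c1 * (1 + |z|) + c1 * |h| := by
      intro t ht
      rw [Set.uIoc_of_le (by positivity : (0:ℝ) ≤ 1/(n:ℝ))] at ht
      have ht1 : |t| ≤ 1 := by
        rw [abs_of_pos ht.1]
        calc t ≤ 1/(n:ℝ) := ht.2
          _ ≤ 1 := by rw [div_le_one hn']; exact hn1
      have hhn : |h|/(n:ℝ) ≤ |h| := by
        rw [div_le_iff₀ hn']
        nlinarith [abs_nonneg h]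
      have habs : |t + z - h/(n:ℝ)| ≤ |t| + |z| + |h|/(n:ℝ) := by
        calc |t + z - h/(n:ℝ)| ≤ |t + z| + |h/(n:ℝ)| := abs_sub _ _
          _ ≤ |t| + |z| + |h|/(n:ℝ) := by
              rw [abs_div, abs_of_pos hn']
              linarith [abs_add_le t z]
      rw [Real.norm_eq_abs]
      calc |f (t + z - h/(n:ℝ))| ≤ c0 + c1 * |t + z - h/(n:ℝ)| := hgrow _
        _ ≤ c0 + c1 * (1 + |z| + |h|) := by nlinarith
        _ = c0 + c1 * (1 + |z|) + c1 * |h| := by ring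
    have h2 := intervalIntegral.norm_integral_le_of_norm_le_const h1
    rw [Real.norm_eq_abs] at h2
    have e : |1/(n:ℝ) - 0| = 1/(n:ℝ) := by
      rw [sub_zero, abs_of_pos (by positivity)]
    rw [e] at h2
    exact h2
  -- integrability of the product
  have hPsiInt := integrable_Psi hB hq hβ
  set Cst := (q + 1/q) * Real.exp L with hCst
  have hCst0 : 0 < Cst := by rw [hCst]; positivity
  have hIntegrand : ∀ z : ℝ, Integrable fun h => I z h * Psi B q β h := by
    intro z
    have hz : 0 ≤ c0 + c1 * (1 + |z|) := by
      have h1 := hgrow z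
      have h2 := abs_nonneg (f z)
      have h3 := abs_nonneg z
      nlinarith
    set A := (c0 + c1 * (1 + |z|)) * (1/(n:ℝ)) with hA
    have hA0 : 0 ≤ A := by rw [hA]; positivity
    have hc1n : 0 ≤ c1 * (1/(n:ℝ)) := by positivity
    refine Integrable.mono'
      ((integrable_exp_neg_abs (half_pos hL)).const_mul ((A + 2 * (c1 * (1/(n:ℝ))) / L) * Cst))
      (((hIcont z).mul (continuous_Psi hB hq)).aestronglyMeasurable)
      (ae_of_all _ fun h => ?_)
    rw [norm_mul, Real.norm_eq_abs, Real.norm_eq_abs, abs_of_nonneg (Psi_nonneg hB hq hβ h)]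
    have hb1 : 0 ≤ (c0 + c1 * (1 + |z|) + c1 * |h|) * (1/(n:ℝ)) := by positivity
    have hPle : Psi B q β h ≤ Cst * Real.exp (-(L * |h|)) := by
      have := Psi_le hB hq hβ h
      rw [hCst, mul_assoc] at *
      exact this
    calc |I z h| * Psi B q β h
        ≤ ((c0 + c1 * (1 + |z|) + c1 * |h|) * (1/(n:ℝ))) * (Cst * Real.exp (-(L * |h|))) := by
          apply mul_le_mul (hIbound z h) hPle (Psi_nonneg hB hq hβ h) hb1
      _ = ((A + (c1 * (1/(n:ℝ))) * |h|) * Real.exp (-(L * |h|))) * Cst := by rw [hA]; ring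
      _ ≤ ((A + 2 * (c1 * (1/(n:ℝ))) / L) * Real.exp (-(L/2 * |h|))) * Cst := by
          apply mul_le_mul_of_nonneg_right
            (poly_exp_bound hL hA0 hc1n (abs_nonneg h)) hCst0.le
      _ = (A + 2 * (c1 * (1/(n:ℝ))) / L) * Cst * Real.exp (-(L/2 * |h|)) := by ring
  -- the main estimate
  have hdx : opAStarPt B q β n f x = (n:ℝ) * ∫ h, I x h * Psi B q β h := rfl
  have hdy : opAStarPt B q β n f y = (n:ℝ) * ∫ h, I y h * Psi B q β h := rfl
  have hdiff : opAStarPt B q β n f x - opAStarPt B q β n f y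
      = (n:ℝ) * ∫ h, (I x h - I y h) * Psi B q β h := by
    rw [hdx, hdy, ← mul_sub, ← integral_sub (hIntegrand x) (hIntegrand y)]
    congr 1
    apply integral_congr_ae
    refine ae_of_all _ fun h => ?_
    ring
  have hptbound : ∀ h : ℝ, ‖(I x h - I y h) * Psi B q β h‖ ≤ ε * (1/(n:ℝ)) * Psi B q β h := by
    intro h
    have hint : ∀ z : ℝ, IntervalIntegrable (fun t => f (t + z - h/(n:ℝ))) volume 0 (1/(n:ℝ)) :=
      fun z => (hcont.comp (by continuity)).intervalIntegrable _ _
    have hsub : I x h - I y h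
        = ∫ t in (0:ℝ)..(1/(n:ℝ)), (f (t + x - h/(n:ℝ)) - f (t + y - h/(n:ℝ))) := by
      rw [hIdef]
      simp only
      rw [intervalIntegral.integral_sub (hint x) (hint y)]
    have hIxy : |I x h - I y h| ≤ ε * (1/(n:ℝ)) := by
      rw [hsub]
      have h1 : ∀ t ∈ Set.uIoc (0:ℝ) (1/(n:ℝ)),
          ‖f (t + x - h/(n:ℝ)) - f (t + y - h/(n:ℝ))‖ ≤ ε := by
        intro t _
        rw [Real.norm_eq_abs]
        apply hclose
        have e : (t + x - h/(n:ℝ)) - (t + y - h/(n:ℝ)) = x - y := by ring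
        rw [e]
      have h2 := intervalIntegral.norm_integral_le_of_norm_le_const h1
      rw [Real.norm_eq_abs] at h2
      have e : |1/(n:ℝ) - 0| = 1/(n:ℝ) := by rw [sub_zero, abs_of_pos (by positivity)]
      rw [e] at h2
      exact h2
    rw [norm_mul, Real.norm_eq_abs, Real.norm_eq_abs, abs_of_nonneg (Psi_nonneg hB hq hβ h)]
    exact mul_le_mul_of_nonneg_right hIxy (Psi_nonneg hB hq hβ h)
  have hige : |∫ h, (I x h - I y h) * Psi B q β h| ≤ ε * (1/(n:ℝ)) := by
    have h1 := norm_integral_le_of_norm_le (hPsiInt.const_mul (ε * (1/(n:ℝ))))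
      (ae_of_all _ hptbound)
    rw [integral_const_mul, integral_Psi_eq_one hB hq hβ, mul_one, Real.norm_eq_abs] at h1
    exact h1
  rw [hdiff, abs_mul, abs_of_pos hn']
  calc (n:ℝ) * |∫ h, (I x h - I y h) * Psi B q β h| ≤ (n:ℝ) * (ε * (1/(n:ℝ))) :=
        mul_le_mul_of_nonneg_left hige hn'.le
    _ = ε := by field_simp

end Key

/-- `A_n^*` preserves global smoothness: `ω(A_n^* f, θ) ≤ ω(f, θ)`,
and `A_n^* f` is uniformly continuous when `f` is. -/
theorem opAStar_global_smoothness (B q β : ℝ) (hB : 1 < B) (hq : 0 < q) (hβ : 0 < β)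
    (f : ℝ → ℝ)
    (hf : (Continuous f ∧ ∃ M : ℝ, ∀ x : ℝ, |f x| ≤ M) ∨ UniformContinuous f)
    (n : ℕ) :
    (∀ θ : ℝ, 0 < θ → modCont (opAStarPt B q β n f) θ ≤ modCont f θ) ∧
    (UniformContinuous f → UniformContinuous (opAStarPt B q β n f)) := by
  have hcont : Continuous f := by
    rcases hf with ⟨hc, _⟩ | huc
    · exact hc
    · exact huc.continuous
  obtain ⟨c0, c1, hc1, hgrow⟩ : ∃ c0 c1 : ℝ, 0 ≤ c1 ∧ ∀ z : ℝ, |f z| ≤ c0 + c1 * |z| := by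
    rcases hf with ⟨_, M, hM⟩ | huc
    · exact ⟨M, 0, le_rfl, fun z => by simpa using hM z⟩
    · exact uc_growth huc
  constructor
  · intro θ hθ
    have hbddf := bddAbove_modContSet hf θ
    have hmc0 : 0 ≤ modCont f θ := modCont_nonneg hbddf hθ.le
    apply Real.sSup_le _ hmc0
    rintro d ⟨x, y, hxy, rfl⟩
    apply key_estimate hB hq hβ hcont hc1 hgrow n hmc0
    intro u v huv
    exact le_modCont hbddf (huv.trans hxy)
  · intro huc
    rw [Metric.uniformContinuous_iff]
    intro ε hε
    obtain ⟨δ, hδ, hbase⟩ := uc_base huc (half_pos hε)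
    refine ⟨δ, hδ, ?_⟩
    intro x y hxy
    rw [Real.dist_eq] at hxy ⊢
    have hkey : |opAStarPt B q β n f x - opAStarPt B q β n f y| ≤ ε / 2 := by
      apply key_estimate hB hq hβ hcont hc1 hgrow n (half_pos hε).le
      intro u v huv
      exact hbase u v (huv.trans hxy.le)
    linarith
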